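/- Let K be a field, m ≥ 1, s ∈ ℤ^m, let P ∈ K[X]^{m×m} be nonsingular and in s-weak Popov form with s-pivot degree δ = (δ_1,…,δ_m), and let Q ∈ K[X]^{m×m} be in s-Popov form and left-unimodularly equivalent to P. Then the column degree of Q is δ, i.e., for each j the diagonal entry Q_{jj} has degree δ_j. -/

import Mathlib

/-!
If the rows of `R` have pairwise distinct `s`-pivots, the leading terms of a combination
`u ᵥ* R = ∑ i, u i • R i` cannot cancel: among the summands of largest `s`-degree, the one
with the largest pivot index `j` is the only summand reaching that `s`-degree at position `j`
or beyond. So the pivot of `u ᵥ* R` is the pivot `j` of some row `R i` with `u i ≠ 0`, and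
`deg R i j ≤ deg (u ᵥ* R) j`. As `U` is unimodular, `Q = U P` and `P = U⁻¹ Q` are both
such combinations; applied to the row of `Q` with pivot `j` and to the row of `P` with
pivot `j`, this gives `δ j ≤ deg Q j j` and `deg Q j j ≤ δ j`.
-/

open Polynomial Matrix

/-- Degree of a polynomial as an element of `WithBot ℤ`, with `degZ 0 = ⊥`. -/
noncomputable def degZ {K : Type*} [Field K] (p : Polynomial K) : WithBot ℤ :=
  p.degree.map (fun n : ℕ => (n : ℤ))

/-- The `s`-degree of a row vector `p`: `max_j (deg p_j + s_j)`. -/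
noncomputable def sdeg {K : Type*} [Field K] {ι : Type*} [Fintype ι]
    (s : ι → ℤ) (p : ι → Polynomial K) : WithBot ℤ :=
  Finset.univ.sup fun j => degZ (p j) + (s j : WithBot ℤ)

/-- `j` is the `s`-pivot index of the row `p`: the largest index at which the
`s`-degree of `p` is attained. -/
def IsPivotIndex {K : Type*} [Field K] {ι : Type*} [Fintype ι] [LinearOrder ι]
    (s : ι → ℤ) (p : ι → Polynomial K) (j : ι) : Prop :=
  degZ (p j) + (s j : WithBot ℤ) = sdeg s p ∧
    ∀ k, j < k → degZ (p k) + (s k : WithBot ℤ) ≠ sdeg s p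

/-- `P` is in `s`-Popov form: it is nonsingular, the `s`-pivot entries are monic and
on the diagonal, and in each column the nonpivot entries have degree less than
the pivot entry. -/
def IsPopov {K : Type*} [Field K] {m : ℕ} (s : Fin m → ℤ)
    (P : Matrix (Fin m) (Fin m) (Polynomial K)) : Prop :=
  P.det ≠ 0 ∧ (∀ i, IsPivotIndex s (P i) i) ∧ (∀ i, (P i i).Monic) ∧
    ∀ i j, i ≠ j → (P i j).degree < (P j j).degree

/-- `p` is an interpolant for `(E, J)`: `∑ i, (row i of E) ⋅ (p i)(J) = 0`. -/
def IsInterpolant {K : Type*} [Field K] {ι n : Type*} [Fintype ι] [Fintype n] [DecidableEq n]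
    (E : Matrix ι n K) (J : Matrix n n K) (p : ι → Polynomial K) : Prop :=
  ∑ i, Matrix.vecMul (E i) (Polynomial.aeval J (p i)) = 0

/-- `P` is an interpolation basis for `(E, J)`: its rows form a basis of the
`K[X]`-module of interpolants for `(E, J)`. -/
def IsInterpolationBasis {K : Type*} [Field K] {ι n : Type*} [Fintype ι] [Fintype n]
    [DecidableEq n] (E : Matrix ι n K) (J : Matrix n n K)
    (P : Matrix ι ι (Polynomial K)) : Prop :=
  LinearIndependent (Polynomial K) (fun i => P i) ∧
    (Submodule.span (Polynomial K) (Set.range fun i => P i) : Set (ι → Polynomial K))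
      = {p | IsInterpolant E J p}

/-- The product `Q ⋅ E`: the matrix over `K` whose `i`-th row is `∑ j, (E j) ⋅ (Q i j)(J)`. -/
noncomputable def polMulMat {K : Type*} [Field K] {κ ι n : Type*} [Fintype κ] [Fintype ι]
    [Fintype n] [DecidableEq n]
    (Q : Matrix κ ι (Polynomial K)) (E : Matrix ι n K) (J : Matrix n n K) : Matrix κ n K :=
  fun i => ∑ j, Matrix.vecMul (E j) (Polynomial.aeval J (Q i j))

/-- The `s`-leading matrix of `R`: if row `i` has `s`-degree `d`, its `(i,j)` entry is
the coefficient of degree `d - s j` in `R i j` (and `0` if row `i` is zero). -/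
noncomputable def leadingMatrix {K : Type*} [Field K] {ι : Type*} [Fintype ι]
    (s : ι → ℤ) (R : Matrix ι ι (Polynomial K)) : Matrix ι ι K := fun i j =>
  WithBot.recBotCoe 0
    (fun d => if 0 ≤ d - s j then (R i j).coeff (d - s j).toNat else 0)
    (sdeg s (R i))

section Degree

variable {K : Type*} [Field K]

lemma strictMono_withBotMap_natCast :
    StrictMono (WithBot.map (Nat.cast : ℕ → ℤ)) :=
  Nat.strictMono_cast.withBot_map

@[simp]
lemma degZ_eq_bot_iff {p : K[X]} : degZ p = ⊥ ↔ p = 0 := by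
  simp [degZ]

@[simp]
lemma degZ_zero : degZ (0 : K[X]) = ⊥ := degZ_eq_bot_iff.mpr rfl

lemma degZ_lt_degZ_iff {p q : K[X]} : degZ p < degZ q ↔ p.degree < q.degree :=
  strictMono_withBotMap_natCast.lt_iff_lt

lemma degZ_mul (p q : K[X]) : degZ (p * q) = degZ p + degZ q := by
  simp only [degZ, degree_mul]
  cases p.degree <;> cases q.degree <;> simp [← WithBot.coe_add]

lemma degZ_add_le (p q : K[X]) : degZ (p + q) ≤ max (degZ p) (degZ q) := by
  simp only [degZ, ← strictMono_withBotMap_natCast.monotone.map_max]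
  exact strictMono_withBotMap_natCast.monotone (degree_add_le p q)

lemma degZ_sum_add_le {ι : Type*} {t : Finset ι} {g : ι → K[X]} {c M : WithBot ℤ}
    (h : ∀ i ∈ t, degZ (g i) + c ≤ M) : degZ (∑ i ∈ t, g i) + c ≤ M :=
  Finset.sum_induction g (fun p => degZ p + c ≤ M)
    (fun p q hp hq => (add_le_add_left (degZ_add_le p q) c).trans
      (by rw [← max_add_add_right]; exact max_le hp hq))
    (by simp) h

lemma degZ_sum_add_lt {ι : Type*} {t : Finset ι} {g : ι → K[X]} {c M : WithBot ℤ}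
    (hM : M ≠ ⊥) (h : ∀ i ∈ t, degZ (g i) + c < M) : degZ (∑ i ∈ t, g i) + c < M :=
  Finset.sum_induction g (fun p => degZ p + c < M)
    (fun p q hp hq => (add_le_add_left (degZ_add_le p q) c).trans_lt
      (by rw [← max_add_add_right]; exact max_lt hp hq))
    (by simpa [bot_lt_iff_ne_bot]) h

end Degree

section Pivot

variable {K : Type*} [Field K] {ι : Type*} [Fintype ι] {s : ι → ℤ} {p : ι → K[X]}

lemma degZ_add_le_sdeg (s : ι → ℤ) (p : ι → K[X]) (k : ι) :
    degZ (p k) + s k ≤ sdeg s p :=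
  Finset.le_sup (f := fun j => degZ (p j) + (s j : WithBot ℤ)) (Finset.mem_univ k)

@[simp]
lemma sdeg_zero (s : ι → ℤ) : sdeg s (0 : ι → K[X]) = ⊥ := by
  simp [sdeg]

lemma sdeg_ne_bot (hp : p ≠ 0) : sdeg s p ≠ ⊥ := by
  obtain ⟨k, hk⟩ := Function.ne_iff.mp hp
  refine ne_bot_of_le_ne_bot ?_ (degZ_add_le_sdeg s p k)
  exact WithBot.add_ne_bot.mpr ⟨degZ_eq_bot_iff.not.mpr hk, WithBot.coe_ne_bot⟩

lemma degZ_mul_add_le (c : K[X]) (k : ι) :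
    degZ (c * p k) + s k ≤ degZ c + sdeg s p := by
  rw [degZ_mul, add_assoc]
  exact add_le_add_right (degZ_add_le_sdeg s p k) _

variable [LinearOrder ι] {j : ι}

lemma isPivotIndex_of_le {M : WithBot ℤ} (hle : ∀ k, degZ (p k) + s k ≤ M)
    (heq : degZ (p j) + s j = M) (hlt : ∀ k, j < k → degZ (p k) + s k < M) :
    IsPivotIndex s p j := by
  have hM : sdeg s p = M :=
    le_antisymm (Finset.sup_le fun k _ => hle k) (heq ▸ degZ_add_le_sdeg s p j)
  exact ⟨hM ▸ heq, fun k hk => hM ▸ (hlt k hk).ne⟩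

namespace IsPivotIndex

lemma unique {j' : ι} (h : IsPivotIndex s p j) (h' : IsPivotIndex s p j') : j = j' := by
  rcases lt_trichotomy j j' with hlt | heq | hlt
  · exact absurd h'.1 (h.2 j' hlt)
  · exact heq
  · exact absurd h.1 (h'.2 j hlt)

lemma degZ_mul_add_eq (h : IsPivotIndex s p j) (c : K[X]) :
    degZ (c * p j) + s j = degZ c + sdeg s p := by
  rw [degZ_mul, add_assoc, h.1]

lemma degZ_mul_add_lt (h : IsPivotIndex s p j) {c : K[X]} (hc : c ≠ 0) {k : ι} (hjk : j < k) :
    degZ (c * p k) + s k < degZ c + sdeg s p := by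
  rw [degZ_mul, add_assoc]
  refine WithBot.add_lt_add_left (degZ_eq_bot_iff.not.mpr hc) ?_
  exact (degZ_add_le_sdeg s p k).lt_of_ne (h.2 k hjk)

lemma smul (h : IsPivotIndex s p j) {c : K[X]} (hc : c ≠ 0) : IsPivotIndex s (c • p) j :=
  isPivotIndex_of_le (fun k => degZ_mul_add_le c k) (h.degZ_mul_add_eq c)
    fun _ hk => h.degZ_mul_add_lt hc hk

end IsPivotIndex

end Pivot

lemma exists_forall_le_and_le_of_eq {κ α β : Type*} [Fintype κ] [Nonempty κ]
    [LinearOrder α] [LinearOrder β] (f : κ → α) (g : κ → β) :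
    ∃ i, ∀ i', f i' ≤ f i ∧ (f i' = f i → g i' ≤ g i) := by
  obtain ⟨i, -, hi⟩ :=
    Finset.exists_max_image Finset.univ (fun i => toLex (f i, g i)) Finset.univ_nonempty
  refine ⟨i, fun i' => ?_⟩
  rcases Prod.Lex.le_iff.mp (hi i' (Finset.mem_univ i')) with hlt | ⟨heq, hle⟩
  · exact ⟨hlt.le, fun heq => absurd heq hlt.ne⟩
  · exact ⟨heq.le, fun _ => hle⟩

section RowSum

variable {K : Type*} [Field K] {κ ι : Type*} [Fintype κ] [Fintype ι] [LinearOrder ι]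
  {s : ι → ℤ} {pv : κ → ι}

theorem exists_isPivotIndex_sum {r : κ → ι → K[X]}
    (hpv : ∀ i, r i ≠ 0 → IsPivotIndex s (r i) (pv i)) (hinj : Function.Injective pv)
    (hr : r ≠ 0) :
    ∃ i₀, r i₀ ≠ 0 ∧ IsPivotIndex s (∑ i, r i) (pv i₀) ∧
      ((∑ i, r i) (pv i₀)).degree = (r i₀ (pv i₀)).degree := by
  classical
  obtain ⟨i₁, hi₁⟩ := Function.ne_iff.mp hr
  have : Nonempty κ := ⟨i₁⟩
  obtain ⟨i₀, hi₀⟩ := exists_forall_le_and_le_of_eq (fun i => sdeg s (r i)) pv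
  set M := sdeg s (r i₀)
  have hM : M ≠ ⊥ := ne_bot_of_le_ne_bot (sdeg_ne_bot hi₁) (hi₀ i₁).1
  have hr₀ : r i₀ ≠ 0 := fun h => hM (by simp only [M, h, sdeg_zero])
  have hle : ∀ k, degZ ((∑ i, r i) k) + s k ≤ M := fun k => by
    rw [Finset.sum_apply]
    exact degZ_sum_add_le fun i _ => (degZ_add_le_sdeg s (r i) k).trans (hi₀ i).1
  have hlt : ∀ i k, pv i₀ ≤ k → (i ≠ i₀ ∨ pv i₀ < k) → degZ (r i k) + s k < M := by
    intro i k hk hik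
    rcases (hi₀ i).1.lt_or_eq with hfi | hfi
    · exact (degZ_add_le_sdeg s (r i) k).trans_lt hfi
    have hri : r i ≠ 0 := fun h => hM (by simp only [← hfi, h, sdeg_zero])
    have hpvi : pv i < k := by
      rcases hik with hne | hk'
      · exact ((hi₀ i).2 hfi).lt_of_ne (hinj.ne hne) |>.trans_le hk
      · exact ((hi₀ i).2 hfi).trans_lt hk'
    exact hfi ▸ (degZ_add_le_sdeg s (r i) k).lt_of_ne ((hpv i hri).2 k hpvi)
  have hrest : degZ (∑ i ∈ Finset.univ.erase i₀, r i (pv i₀)) + s (pv i₀) <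
      degZ (r i₀ (pv i₀)) + s (pv i₀) := by
    rw [(hpv i₀ hr₀).1]
    exact degZ_sum_add_lt hM fun i hi => hlt i _ le_rfl (.inl (Finset.ne_of_mem_erase hi))
  have hlead : ((∑ i, r i) (pv i₀)).degree = (r i₀ (pv i₀)).degree := by
    rw [Finset.sum_apply, ← Finset.add_sum_erase _ _ (Finset.mem_univ i₀)]
    exact degree_add_eq_left_of_degree_lt
      (degZ_lt_degZ_iff.mp ((WithBot.add_lt_add_iff_right WithBot.coe_ne_bot).mp hrest))
  refine ⟨i₀, hr₀, isPivotIndex_of_le hle ?_ fun k hk => ?_, hlead⟩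
  · rw [degZ, hlead, ← degZ, (hpv i₀ hr₀).1]
  · rw [Finset.sum_apply]
    exact degZ_sum_add_lt hM fun i _ => hlt i k hk.le (.inr hk)

theorem IsPivotIndex.exists_degree_le_of_vecMul {R : Matrix κ ι K[X]}
    (hpv : ∀ i, IsPivotIndex s (R i) (pv i)) (hinj : Function.Injective pv) {u : κ → K[X]}
    (hv : u ᵥ* R ≠ 0) {j : ι} (hj : IsPivotIndex s (u ᵥ* R) j) :
    ∃ i, pv i = j ∧ (R i j).degree ≤ ((u ᵥ* R) j).degree := by
  have hsum : u ᵥ* R = ∑ i, u i • R i := by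
    ext k
    simp [vecMul_apply_eq_sum, Finset.sum_apply]
  obtain ⟨i₀, hr₀, hpiv, hdeg⟩ := exists_isPivotIndex_sum (r := fun i => u i • R i)
    (fun i hi => (hpv i).smul (left_ne_zero_of_smul hi)) hinj
    fun h => hv (by rw [hsum]; exact Finset.sum_eq_zero fun i _ => congrFun h i)
  rw [← hsum] at hpiv hdeg
  rw [hj.unique hpiv, hdeg, Pi.smul_apply, smul_eq_mul, mul_comm]
  exact ⟨i₀, rfl, degree_le_mul_left _ (left_ne_zero_of_smul hr₀)⟩

end RowSum

lemma Matrix.row_ne_zero_of_det_ne_zero {n R : Type*} [Fintype n] [DecidableEq n] [CommRing R]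
    {A : Matrix n n R} (hA : A.det ≠ 0) (i : n) : A i ≠ 0 :=
  fun h => hA (det_eq_zero_of_row_eq_zero i fun k => congrFun h k)

theorem popov_form_column_degree_eq_pivot_degree_general {K : Type*} [Field K] {m : ℕ}
    (s : Fin m → ℤ)
    (P Q U : Matrix (Fin m) (Fin m) (Polynomial K))
    (hPdet : P.det ≠ 0) (piv : Fin m → Fin m)
    (hpiv : ∀ i, IsPivotIndex s (P i) (piv i)) (hinj : Function.Injective piv)
    (δ : Fin m → ℕ) (hδ : ∀ i, (P i (piv i)).natDegree = δ (piv i))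
    (hQ : IsPopov s Q)
    (hU : ∃ c : K, c ≠ 0 ∧ U.det = Polynomial.C c) (hQU : Q = U * P) :
    ∀ j, (Q j j).natDegree = δ j := by
  obtain ⟨hQdet, hQpiv, -, -⟩ := hQ
  obtain ⟨c, hc, hUdet⟩ := hU
  have hPQ : P = U⁻¹ * Q := by
    rw [hQU, ← Matrix.mul_assoc, nonsing_inv_mul U (by simp [hUdet, hc]), Matrix.one_mul]
  intro j
  obtain ⟨i, rfl⟩ := (Finite.injective_iff_surjective.mp hinj) j
  rw [← hδ i]
  apply le_antisymm
  · have hPi : P i = U⁻¹ i ᵥ* Q := by rw [hPQ, mul_apply_eq_vecMul]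
    obtain ⟨l, rfl, hdeg⟩ := IsPivotIndex.exists_degree_le_of_vecMul hQpiv Function.injective_id
      (hPi ▸ row_ne_zero_of_det_ne_zero hPdet i) (hPi ▸ hpiv i)
    exact natDegree_le_natDegree (hPi ▸ hdeg)
  · have hQj : Q (piv i) = U (piv i) ᵥ* P := by rw [hQU, mul_apply_eq_vecMul]
    obtain ⟨i', hi', hdeg⟩ := IsPivotIndex.exists_degree_le_of_vecMul hpiv hinj
      (hQj ▸ row_ne_zero_of_det_ne_zero hQdet (piv i)) (hQj ▸ hQpiv (piv i))
    obtain rfl := hinj hi'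
    exact natDegree_le_natDegree (hQj ▸ hdeg)

/-- if `P` is nonsingular in `s`-weak Popov form with `s`-pivot degree `δ`
and `Q` is in `s`-Popov form, left-unimodularly equivalent to `P`, then the column
degree of `Q` is `δ`, i.e. `deg Q j j = δ j` for all `j`. -/
theorem popov_form_column_degree_eq_pivot_degree {K : Type*} [Field K] {m : ℕ}
    (hm : 1 ≤ m) (s : Fin m → ℤ)
    (P Q U : Matrix (Fin m) (Fin m) (Polynomial K))
    (hPdet : P.det ≠ 0) (piv : Fin m → Fin m)
    (hpiv : ∀ i, IsPivotIndex s (P i) (piv i)) (hinj : Function.Injective piv)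
    (δ : Fin m → ℕ) (hδ : ∀ i, (P i (piv i)).natDegree = δ (piv i))
    (hQ : IsPopov s Q)
    (hU : ∃ c : K, c ≠ 0 ∧ U.det = Polynomial.C c) (hQU : Q = U * P) :
    ∀ j, (Q j j).natDegree = δ j :=
  popov_form_column_degree_eq_pivot_degree_general s P Q U hPdet piv hpiv hinj δ hδ hQ hU hQU
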